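/- arXiv:1110.2873 — 2 statements merged into one kernel-verified Lean document; each statement's English description precedes it below -/
import Mathlib

section
/- Under the artificial target φ, the conditional density of the remaining particles and all ancestor indices given {θ, x_{1:T}^{j_{1:T}}, j_{1:T}} equals [ψ^θ(X_{1:T}, I_{2:T}) / (R_1^θ(x_1^{j_1}) ∏_{t=2}^T M_t^θ(i_t^{j_t}, x_t^{j_t}))] · ∏_{t=2}^T w_{t-1}^{i_t^{j_t}} f_θ(x_t^{j_t} | x_{t-1}^{i_t^{j_t}}) / (Σ_l w_{t-1}^l f_θ(x_t^{j_t} | x_{t-1}^l)), which is exactly the density of the variables generated by the conditional auxiliary particle filter. -/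
open MeasureTheory Finset

/-! ### The PG-BSi construction (Lindsten–Schön).
Times are `0`-based: index `t : Fin T` is time `t+1` of the paper; ancestor indices for
time `t ≥ 1` are stored at `I ⟨t-1, _⟩`.  Throughout, `mu0` is the initial density
`μ_θ(x_1)`, `g t x = g_θ(y_{t+1} | x)` (observations fixed), `f x xp = f_θ(x | xp)`,
`vadj t x = ν_t^θ(x, y_{t+2})` are the adjustment multipliers, and `R1`, `Rt` are the
proposal densities. -/

/-- The importance weight `w_t^m = W_t^θ(x_t^m, x_{t-1}^{i_t^m})` of the auxiliary
particle filter, with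
`W_t^θ(x, xp) = g_θ(y_t|x) f_θ(x|xp) / (ν_{t-1}^θ(xp, y_t) R_t^θ(x|xp))` for `t ≥ 2`
and `W_1^θ(x) = g_θ(y_1|x) μ_θ(x) / R_1^θ(x)`. -/
noncomputable def pgWgt {X : Type*} (N T : ℕ)
    (mu0 : X → ℝ) (g : ℕ → X → ℝ) (f : X → X → ℝ)
    (vadj : ℕ → X → ℝ) (R1 : X → ℝ) (Rt : ℕ → X → X → ℝ)
    (P : Fin T → Fin N → X) (I : Fin (T - 1) → Fin N → Fin N)
    (t : Fin T) (m : Fin N) : ℝ :=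
  if h : 0 < t.val then
    g t.val (P t m) *
        f (P t m) (P ⟨t.val - 1, by have := t.isLt; omega⟩
          (I ⟨t.val - 1, by have := t.isLt; omega⟩ m)) /
      (vadj (t.val - 1) (P ⟨t.val - 1, by have := t.isLt; omega⟩
          (I ⟨t.val - 1, by have := t.isLt; omega⟩ m)) *
        Rt t.val (P t m) (P ⟨t.val - 1, by have := t.isLt; omega⟩
          (I ⟨t.val - 1, by have := t.isLt; omega⟩ m)))
  else g 0 (P t m) * mu0 (P t m) / R1 (P t m)

/-- The APF proposal kernel density
`M_t^θ(i, x) = (w_{t-1}^i ν_{t-1}^i / ∑_l w_{t-1}^l ν_{t-1}^l) R_t^θ(x | x_{t-1}^i)`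
(for `0 < t.val`; the value at `t = 0` is irrelevant and set to `0`). -/
noncomputable def pgM {X : Type*} (N T : ℕ)
    (mu0 : X → ℝ) (g : ℕ → X → ℝ) (f : X → X → ℝ)
    (vadj : ℕ → X → ℝ) (R1 : X → ℝ) (Rt : ℕ → X → X → ℝ)
    (P : Fin T → Fin N → X) (I : Fin (T - 1) → Fin N → Fin N)
    (t : Fin T) (i : Fin N) (x : X) : ℝ :=
  if h : 0 < t.val then
    (pgWgt N T mu0 g f vadj R1 Rt P I ⟨t.val - 1, by have := t.isLt; omega⟩ i *
          vadj (t.val - 1) (P ⟨t.val - 1, by have := t.isLt; omega⟩ i) /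
        ∑ l, pgWgt N T mu0 g f vadj R1 Rt P I ⟨t.val - 1, by have := t.isLt; omega⟩ l *
          vadj (t.val - 1) (P ⟨t.val - 1, by have := t.isLt; omega⟩ l)) *
      Rt t.val x (P ⟨t.val - 1, by have := t.isLt; omega⟩ i)
  else 0

/-- The joint density `ψ^θ(X_{1:T}, I_{2:T}) = ∏_l R_1^θ(x_1^l) ∏_{t=2}^T ∏_m M_t^θ(i_t^m, x_t^m)`
of all variables generated by the auxiliary particle filter. -/
noncomputable def pgPsi {X : Type*} (N T : ℕ) (hT : 1 ≤ T)
    (mu0 : X → ℝ) (g : ℕ → X → ℝ) (f : X → X → ℝ)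
    (vadj : ℕ → X → ℝ) (R1 : X → ℝ) (Rt : ℕ → X → X → ℝ)
    (P : Fin T → Fin N → X) (I : Fin (T - 1) → Fin N → Fin N) : ℝ :=
  (∏ l, R1 (P ⟨0, by omega⟩ l)) *
    ∏ t : Fin T,
      if h : 0 < t.val then
        ∏ m, pgM N T mu0 g f vadj R1 Rt P I t
          (I ⟨t.val - 1, by have := t.isLt; omega⟩ m) (P t m)
      else 1

/-- The backward-simulation factor
`w_{t-1}^{i_t^{j_t}} f_θ(x_t^{j_t} | x_{t-1}^{i_t^{j_t}}) / ∑_l w_{t-1}^l f_θ(x_t^{j_t} | x_{t-1}^l)`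
(for `0 < t.val`; equal to `1` at `t = 0`). -/
noncomputable def pgBwd {X : Type*} (N T : ℕ)
    (mu0 : X → ℝ) (g : ℕ → X → ℝ) (f : X → X → ℝ)
    (vadj : ℕ → X → ℝ) (R1 : X → ℝ) (Rt : ℕ → X → X → ℝ)
    (P : Fin T → Fin N → X) (I : Fin (T - 1) → Fin N → Fin N)
    (j : Fin T → Fin N) (t : Fin T) : ℝ :=
  if h : 0 < t.val then
    pgWgt N T mu0 g f vadj R1 Rt P I ⟨t.val - 1, by have := t.isLt; omega⟩
        (I ⟨t.val - 1, by have := t.isLt; omega⟩ (j t)) *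
      f (P t (j t)) (P ⟨t.val - 1, by have := t.isLt; omega⟩
        (I ⟨t.val - 1, by have := t.isLt; omega⟩ (j t))) /
      ∑ l, pgWgt N T mu0 g f vadj R1 Rt P I ⟨t.val - 1, by have := t.isLt; omega⟩ l *
        f (P t (j t)) (P ⟨t.val - 1, by have := t.isLt; omega⟩ l)
  else 1

/-- The artificial target density of the PG-BSi sampler (for a fixed parameter `θ`):
`φ(X_{1:T}, I_{2:T}, j_{1:T}) = [post(x_{1:T}^{j_{1:T}})/N^T] ·
[ψ^θ / (R_1^θ(x_1^{j_1}) ∏_{t=2}^T M_t^θ(i_t^{j_t}, x_t^{j_t}))] ·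
∏_{t=2}^T w_{t-1}^{i_t^{j_t}} f_θ(x_t^{j_t}|x_{t-1}^{i_t^{j_t}}) / ∑_l w_{t-1}^l f_θ(x_t^{j_t}|x_{t-1}^l)`,
where `post` is the joint posterior density `p(θ, x_{1:T} | y_{1:T})` as a function of the
state trajectory. -/
noncomputable def pgPhi {X : Type*} (N T : ℕ) (hT : 1 ≤ T)
    (post : (Fin T → X) → ℝ)
    (mu0 : X → ℝ) (g : ℕ → X → ℝ) (f : X → X → ℝ)
    (vadj : ℕ → X → ℝ) (R1 : X → ℝ) (Rt : ℕ → X → X → ℝ)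
    (P : Fin T → Fin N → X) (I : Fin (T - 1) → Fin N → Fin N)
    (j : Fin T → Fin N) : ℝ :=
  post (fun t => P t (j t)) / (N : ℝ) ^ T *
    (pgPsi N T hT mu0 g f vadj R1 Rt P I /
      (R1 (P ⟨0, by omega⟩ (j ⟨0, by omega⟩)) *
        ∏ t : Fin T,
          if h : 0 < t.val then
            pgM N T mu0 g f vadj R1 Rt P I t
              (I ⟨t.val - 1, by have := t.isLt; omega⟩ (j t)) (P t (j t))
          else 1)) *
    ∏ t : Fin T, pgBwd N T mu0 g f vadj R1 Rt P I j t

/-! The APF density `ψ^θ` is a product with one factor per particle: `R_1^θ` at time 1 and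
`M_t^θ` afterwards. Splitting off the factors of the reference trajectory, the denominator of
`φ` cancels exactly them, leaving the density of the off-path particles under the conditional
filter; the backward-simulation factor is already the law of the path's ancestor indices. The
cancellation is legitimate because all APF weights, hence all `M_t^θ`, are positive. -/

theorem prod_dite_prod_eq_mul_prod_sdiff_singleton {ι κ M : Type*} [Fintype ι] [Fintype κ]
    [DecidableEq κ] [CommMonoid M] (p : ι → Prop) [DecidablePred p] (F : ∀ t, p t → κ → M)
    (j : ι → κ) :
    ∏ t, (if h : p t then ∏ m, F t h m else 1)
      = (∏ t, if h : p t then F t h (j t) else 1) *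
        ∏ t, if h : p t then ∏ m ∈ univ \ {j t}, F t h m else 1 := by
  rw [← prod_mul_distrib]
  refine prod_congr rfl fun t _ => ?_
  split_ifs with h
  · exact prod_eq_mul_prod_sdiff_singleton_of_mem (mem_univ _) _
  · exact (one_mul 1).symm

section PGBSi

variable {X : Type*} {N T : ℕ} (hT : 1 ≤ T)
    (mu0 : X → ℝ) (g : ℕ → X → ℝ) (f : X → X → ℝ)
    (vadj : ℕ → X → ℝ) (R1 : X → ℝ) (Rt : ℕ → X → X → ℝ)
    (P : Fin T → Fin N → X) (I : Fin (T - 1) → Fin N → Fin N) (j : Fin T → Fin N)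

noncomputable def pgPathDensity : ℝ :=
  R1 (P ⟨0, by omega⟩ (j ⟨0, by omega⟩)) *
    ∏ t : Fin T,
      if h : 0 < t.val then
        pgM N T mu0 g f vadj R1 Rt P I t
          (I ⟨t.val - 1, by have := t.isLt; omega⟩ (j t)) (P t (j t))
      else 1

noncomputable def pgOffPathDensity : ℝ :=
  (∏ m ∈ univ \ {j ⟨0, by omega⟩}, R1 (P ⟨0, by omega⟩ m)) *
    ∏ t : Fin T,
      if h : 0 < t.val then
        ∏ m ∈ univ \ {j t},
          pgM N T mu0 g f vadj R1 Rt P I t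
            (I ⟨t.val - 1, by have := t.isLt; omega⟩ m) (P t m)
      else 1

theorem pgPsi_eq_pgPathDensity_mul_pgOffPathDensity :
    pgPsi N T hT mu0 g f vadj R1 Rt P I
      = pgPathDensity hT mu0 g f vadj R1 Rt P I j *
        pgOffPathDensity hT mu0 g f vadj R1 Rt P I j := by
  rw [pgPsi, pgPathDensity, pgOffPathDensity,
    prod_eq_mul_prod_sdiff_singleton_of_mem (mem_univ (j ⟨0, by omega⟩)),
    prod_dite_prod_eq_mul_prod_sdiff_singleton (fun t : Fin T => 0 < t.val)
      (fun t h m => pgM N T mu0 g f vadj R1 Rt P I t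
        (I ⟨t.val - 1, by have := t.isLt; omega⟩ m) (P t m)) j]
  ring

variable {mu0 g f vadj R1 Rt}
    (hmu0p : ∀ x, 0 < mu0 x) (hgp : ∀ t x, 0 < g t x) (hfp : ∀ a b, 0 < f a b)
    (hvp : ∀ t x, 0 < vadj t x) (hR1p : ∀ x, 0 < R1 x) (hRtp : ∀ t a b, 0 < Rt t a b)

include hmu0p hgp hfp hvp hR1p hRtp

theorem pgWgt_pos (t : Fin T) (m : Fin N) : 0 < pgWgt N T mu0 g f vadj R1 Rt P I t m := by
  unfold pgWgt
  split
  · exact div_pos (mul_pos (hgp _ _) (hfp _ _)) (mul_pos (hvp _ _) (hRtp _ _ _))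
  · exact div_pos (mul_pos (hgp _ _) (hmu0p _)) (hR1p _)

theorem pgM_pos (t : Fin T) (ht : 0 < t.val) (i : Fin N) (x : X) :
    0 < pgM N T mu0 g f vadj R1 Rt P I t i x := by
  have hwv : ∀ l, 0 < pgWgt N T mu0 g f vadj R1 Rt P I ⟨t.val - 1, by omega⟩ l *
      vadj (t.val - 1) (P ⟨t.val - 1, by omega⟩ l) := fun l =>
    mul_pos (pgWgt_pos P I hmu0p hgp hfp hvp hR1p hRtp _ l) (hvp _ _)
  rw [pgM, dif_pos ht]
  exact mul_pos (div_pos (hwv i) (sum_pos (fun l _ => hwv l) ⟨i, mem_univ i⟩)) (hRtp _ _ _)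

theorem pgPathDensity_pos : 0 < pgPathDensity hT mu0 g f vadj R1 Rt P I j := by
  refine mul_pos (hR1p _) (prod_pos fun t _ => ?_)
  split_ifs with ht
  · exact pgM_pos P I hmu0p hgp hfp hvp hR1p hRtp t ht _ _
  · exact one_pos

end PGBSi

/-- **Proposition 2: the conditional of `φ` is the density of the conditional APF.**
Since the marginal of `φ` in `(x_{1:T}^{j_{1:T}}, j_{1:T})` is `post/N^T`, the conditional
density of the remaining particles and all ancestor indices given
`{x_{1:T}^{j_{1:T}}, j_{1:T}}` is `φ / (post/N^T)`; the statement asserts that `φ`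
factorizes as `(post/N^T)` times exactly the density of the variables generated by the
conditional auxiliary particle filter: the off-path initial proposals `R1`, the off-path
proposal kernels `M_t`, and the ancestor-index probabilities
`w_{t-1}^m f_θ(x_t^{j_t}|x_{t-1}^m)/∑_l w_{t-1}^l f_θ(x_t^{j_t}|x_{t-1}^l)` on the path. -/
theorem pgbsi_conditional_is_capf
    {X : Type*}
    (N T : ℕ) (hT : 1 ≤ T)
    (post : (Fin T → X) → ℝ)
    (mu0 : X → ℝ) (g : ℕ → X → ℝ) (f : X → X → ℝ)
    (vadj : ℕ → X → ℝ) (R1 : X → ℝ) (Rt : ℕ → X → X → ℝ)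
    -- positivity of all the densities involved
    (hmu0p : ∀ x, 0 < mu0 x) (hgp : ∀ t x, 0 < g t x) (hfp : ∀ a b, 0 < f a b)
    (hvp : ∀ t x, 0 < vadj t x) (hR1p : ∀ x, 0 < R1 x) (hRtp : ∀ t a b, 0 < Rt t a b)
    (P : Fin T → Fin N → X) (I : Fin (T - 1) → Fin N → Fin N)
    (j : Fin T → Fin N) :
    pgPhi N T hT post mu0 g f vadj R1 Rt P I j
      = (post (fun t => P t (j t)) / (N : ℝ) ^ T) *
        ((∏ m ∈ Finset.univ \ {j ⟨0, by omega⟩}, R1 (P ⟨0, by omega⟩ m)) *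
          (∏ t : Fin T,
            if h : 0 < t.val then
              ∏ m ∈ Finset.univ \ {j t},
                pgM N T mu0 g f vadj R1 Rt P I t
                  (I ⟨t.val - 1, by have := t.isLt; omega⟩ m) (P t m)
            else 1) *
          ∏ t : Fin T, pgBwd N T mu0 g f vadj R1 Rt P I j t) := by
  have hpath := pgPathDensity_pos hT P I j hmu0p hgp hfp hvp hR1p hRtp
  change post (fun t => P t (j t)) / (N : ℝ) ^ T *
      (pgPsi N T hT mu0 g f vadj R1 Rt P I / pgPathDensity hT mu0 g f vadj R1 Rt P I j) *
      ∏ t, pgBwd N T mu0 g f vadj R1 Rt P I j t = _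
  rw [pgPsi_eq_pgPathDensity_mul_pgOffPathDensity hT mu0 g f vadj R1 Rt P I j,
    mul_div_cancel_left₀ _ hpath.ne', mul_assoc]
  rfl
end

section
/- Under the artificial target φ, the conditional distribution of the backward-trajectory indices j_{1:T} given {θ, X_{1:T}, I_{2:T}} is φ(j_{1:T} | θ, X_{1:T}, I_{2:T}) = (w_T^{j_T}/Σ_l w_T^l) ∏_{t=2}^T w_{t-1}^{j_{t-1}} f_θ(x_t^{j_t} | x_{t-1}^{j_{t-1}}) / (Σ_l w_{t-1}^l f_θ(x_t^{j_t} | x_{t-1}^l)); that is, it coincides with the law of the backward simulator applied to the particle system. -/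
open MeasureTheory Finset

/-! At each time `t ≥ 2` the proposal density `M_t` in the denominator of `φ` cancels against
`g_θ(y_t | x_t^{j_t})` and the backward factor, leaving
`(∑_l w_{t-1}^l ν_{t-1}^l) · w_t^{j_t} / ∑_l w_{t-1}^l f_θ(x_t^{j_t} | x_{t-1}^l)`,
while at `t = 1` we have `g_θ μ_θ / R_1^θ = w_1^{j_1}`. Hence `φ(j_{1:T})` is a positive
constant, independent of `j_{1:T}`, times the backward-simulator law. That law sums to one over
`j_{1:T}`, because summing out `j_1, j_2, …` in turn only ever sums a backward kernel over its
earlier index; so normalising `φ` in `j_{1:T}` returns the law itself. -/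

theorem sum_pi_mul_prod_eq_sum_of_sum_eq_one {α R : Type*} [Fintype α] [CommSemiring R] :
    ∀ (n : ℕ) (K : Fin n → α → α → R) (u : α → R), (∀ t b, ∑ a, K t a b = 1) →
    ∑ j : Fin (n + 1) → α, u (j (Fin.last n)) * ∏ t : Fin n, K t (j t.castSucc) (j t.succ)
      = ∑ a, u a
  | 0, K, u, _ => by
    rw [← (Equiv.funUnique (Fin 1) α).symm.sum_comp]
    simp
  | n + 1, K, u, hK => by
    rw [← (Fin.consEquiv fun _ => α).sum_comp, Fintype.sum_prod_type, sum_comm]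
    simp only [Fin.consEquiv_apply, Fin.prod_univ_succ, ← Fin.succ_last, ← Fin.succ_castSucc,
      Fin.cons_succ, Fin.castSucc_zero, Fin.cons_zero]
    simp_rw [mul_left_comm _ (K 0 _ _), ← sum_mul, hK, one_mul]
    exact sum_pi_mul_prod_eq_sum_of_sum_eq_one n (fun t => K t.succ) u fun t => hK t.succ

theorem Fin.prod_dite_pos_eq_prod_succ {M : Type*} [CommMonoid M] {n : ℕ}
    (F : (t : Fin (n + 1)) → 0 < t.val → M) :
    (∏ t : Fin (n + 1), if h : 0 < t.val then F t h else 1) =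
      ∏ t : Fin n, F t.succ t.succ_pos := by
  simp [Fin.prod_univ_succ]

theorem div_sum_eq_of_eq_const_mul {ι K : Type*} [Fintype ι] [Field K] {φ B : ι → K} {C : K}
    (hC : C ≠ 0) (hφ : ∀ i, φ i = C * B i) (hB : ∑ i, B i = 1) (i : ι) :
    φ i / ∑ i', φ i' = B i := by
  rw [hφ, Fintype.sum_congr _ _ hφ, ← mul_sum, hB, mul_one, mul_div_cancel_left₀ _ hC]

section
variable {X : Type*} {N n : ℕ} (mu0 : X → ℝ) (g : ℕ → X → ℝ) (f : X → X → ℝ)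
  (vadj : ℕ → X → ℝ) (R1 : X → ℝ) (Rt : ℕ → X → X → ℝ)
  (P : Fin (n + 1) → Fin N → X) (I : Fin n → Fin N → Fin N) (hT : 1 ≤ n + 1)

local notation "w" => pgWgt N (n + 1) mu0 g f vadj R1 Rt P I
local notation "M" => pgM N (n + 1) mu0 g f vadj R1 Rt P I
local notation "bwd" => pgBwd N (n + 1) mu0 g f vadj R1 Rt P I
local notation "ψ" => pgPsi N (n + 1) hT mu0 g f vadj R1 Rt P I

theorem pgWgt_zero (m : Fin N) : w 0 m = g 0 (P 0 m) * mu0 (P 0 m) / R1 (P 0 m) := rfl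

theorem pgWgt_succ (t : Fin n) (m : Fin N) :
    w t.succ m = g (t + 1) (P t.succ m) * f (P t.succ m) (P t.castSucc (I t m)) /
      (vadj t (P t.castSucc (I t m)) * Rt (t + 1) (P t.succ m) (P t.castSucc (I t m))) := rfl

theorem pgM_succ (t : Fin n) (i : Fin N) (x : X) :
    M t.succ i x =
      w t.castSucc i * vadj t (P t.castSucc i) / (∑ l, w t.castSucc l * vadj t (P t.castSucc l)) *
        Rt (t + 1) x (P t.castSucc i) := rfl

theorem pgBwd_zero (j : Fin (n + 1) → Fin N) : bwd j 0 = 1 := rfl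

theorem pgBwd_succ (j : Fin (n + 1) → Fin N) (t : Fin n) :
    bwd j t.succ =
      w t.castSucc (I t (j t.succ)) * f (P t.succ (j t.succ)) (P t.castSucc (I t (j t.succ))) /
        ∑ l, w t.castSucc l * f (P t.succ (j t.succ)) (P t.castSucc l) := rfl

theorem pgPhi_eq_prod_succ (post : (Fin (n + 1) → X) → ℝ) (j : Fin (n + 1) → Fin N) :
    pgPhi N (n + 1) hT post mu0 g f vadj R1 Rt P I j =
      post (fun t => P t (j t)) / (N : ℝ) ^ (n + 1) *
        (ψ / (R1 (P 0 (j 0)) * ∏ t : Fin n, M t.succ (I t (j t.succ)) (P t.succ (j t.succ)))) *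
        ∏ t : Fin n, bwd j t.succ := by
  rw [pgPhi, Fin.prod_dite_pos_eq_prod_succ, Fin.prod_univ_succ, pgBwd_zero, one_mul]
  rfl

/-- `pgBwdKernel t a b` is the probability that the backward simulator, standing at particle `b`
at (0-based) time `t + 1`, picks particle `a` at time `t`. -/
noncomputable def pgBwdKernel (t : Fin n) (a b : Fin N) : ℝ :=
  w t.castSucc a * f (P t.succ b) (P t.castSucc a) /
    ∑ l, w t.castSucc l * f (P t.succ b) (P t.castSucc l)

noncomputable def pgBsiLaw (j : Fin (n + 1) → Fin N) : ℝ :=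
  w (Fin.last n) (j (Fin.last n)) / (∑ l, w (Fin.last n) l) *
    ∏ t : Fin n, pgBwdKernel mu0 g f vadj R1 Rt P I t (j t.castSucc) (j t.succ)

theorem g_mul_pgBwd_div_pgM (hv : ∀ t x, vadj t x ≠ 0) (hRt : ∀ t x y, Rt t x y ≠ 0)
    (hw : ∀ t m, w t m ≠ 0) (j : Fin (n + 1) → Fin N) (t : Fin n) :
    g (t + 1) (P t.succ (j t.succ)) * bwd j t.succ /
        M t.succ (I t (j t.succ)) (P t.succ (j t.succ)) =
      (∑ l, w t.castSucc l * vadj t (P t.castSucc l)) * w t.succ (j t.succ) /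
        ∑ l, w t.castSucc l * f (P t.succ (j t.succ)) (P t.castSucc l) := by
  have := hv t (P t.castSucc (I t (j t.succ)))
  have := hRt (t + 1) (P t.succ (j t.succ)) (P t.castSucc (I t (j t.succ)))
  have := hw t.castSucc (I t (j t.succ))
  rw [pgBwd_succ, pgM_succ, pgWgt_succ]
  field_simp

theorem pgPhi_eq_mul_pgBsiLaw (post : (Fin (n + 1) → X) → ℝ) (Z : ℝ)
    (hpost : ∀ z : Fin (n + 1) → X,
      post z = mu0 (z 0) * (∏ t : Fin n, f (z t.succ) (z t.castSucc)) *
        (∏ t : Fin (n + 1), g t (z t)) / Z)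
    (hR1 : ∀ x, R1 x ≠ 0) (hv : ∀ t x, vadj t x ≠ 0) (hRt : ∀ t x y, Rt t x y ≠ 0)
    (hw : ∀ t m, w t m ≠ 0) (hS : ∑ l, w (Fin.last n) l ≠ 0)
    (hM : ∀ (t : Fin n) i x, M t.succ i x ≠ 0) (j : Fin (n + 1) → Fin N) :
    pgPhi N (n + 1) hT post mu0 g f vadj R1 Rt P I j =
      ψ / (Z * N ^ (n + 1)) *
        ((∏ t : Fin n, ∑ l, w t.castSucc l * vadj t (P t.castSucc l)) *
          ∑ l, w (Fin.last n) l) *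
        pgBsiLaw mu0 g f vadj R1 Rt P I j := by
  have hw_prod : w 0 (j 0) * ∏ t : Fin n, w t.succ (j t.succ) =
      (∏ t : Fin n, w t.castSucc (j t.castSucc)) * w (Fin.last n) (j (Fin.last n)) := by
    rw [← Fin.prod_univ_succ (fun t => w t (j t)), Fin.prod_univ_castSucc]
  calc _ = ψ / (Z * N ^ (n + 1)) *
        (w 0 (j 0) * (∏ t : Fin n, f (P t.succ (j t.succ)) (P t.castSucc (j t.castSucc))) *
          ∏ t : Fin n, g (t + 1) (P t.succ (j t.succ)) * bwd j t.succ /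
            M t.succ (I t (j t.succ)) (P t.succ (j t.succ))) := by
        rw [pgPhi_eq_prod_succ, hpost, Fin.prod_univ_succ (fun t => g t (P t (j t))), pgWgt_zero,
          prod_div_distrib, prod_mul_distrib]
        simp only [Fin.val_zero, Fin.val_succ]
        have := hR1 (P 0 (j 0))
        have := prod_ne_zero_iff.2 fun t (_ : t ∈ univ) =>
          hM t (I t (j t.succ)) (P t.succ (j t.succ))
        field_simp
    _ = ψ / (Z * N ^ (n + 1)) *
        (w 0 (j 0) * (∏ t : Fin n, f (P t.succ (j t.succ)) (P t.castSucc (j t.castSucc))) *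
          ∏ t : Fin n, (∑ l, w t.castSucc l * vadj t (P t.castSucc l)) * w t.succ (j t.succ) /
            ∑ l, w t.castSucc l * f (P t.succ (j t.succ)) (P t.castSucc l)) := by
        simp_rw [g_mul_pgBwd_div_pgM mu0 g f vadj R1 Rt P I hv hRt hw]
    _ = _ := by
        simp only [pgBsiLaw, pgBwdKernel, prod_div_distrib, prod_mul_distrib]
        field_simp
        grind

theorem pgWgt_pos_s9 (hmu0 : ∀ x, 0 < mu0 x) (hg : ∀ t x, 0 < g t x) (hf : ∀ a b, 0 < f a b)
    (hv : ∀ t x, 0 < vadj t x) (hR1 : ∀ x, 0 < R1 x) (hRt : ∀ t a b, 0 < Rt t a b)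
    (t : Fin (n + 1)) (m : Fin N) : 0 < w t m := by
  induction t using Fin.cases with
  | zero => exact div_pos (mul_pos (hg _ _) (hmu0 _)) (hR1 _)
  | succ t => exact div_pos (mul_pos (hg _ _) (hf _ _)) (mul_pos (hv _ _) (hRt _ _ _))

theorem pgM_succ_pos [Nonempty (Fin N)] (hw : ∀ t m, 0 < w t m) (hv : ∀ t x, 0 < vadj t x)
    (hRt : ∀ t a b, 0 < Rt t a b) (t : Fin n) (i : Fin N) (x : X) : 0 < M t.succ i x :=
  mul_pos (div_pos (mul_pos (hw _ _) (hv _ _))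
    (sum_pos (fun _ _ => mul_pos (hw _ _) (hv _ _)) univ_nonempty)) (hRt _ _ _)

theorem pgPsi_pos (hR1 : ∀ x, 0 < R1 x) (hM : ∀ (t : Fin n) i x, 0 < M t.succ i x) :
    0 < ψ := by
  rw [pgPsi, Fin.prod_dite_pos_eq_prod_succ]
  exact mul_pos (prod_pos fun _ _ => hR1 _) (prod_pos fun _ _ => prod_pos fun _ _ => hM _ _ _)

theorem sum_pgBwdKernel (t : Fin n) (b : Fin N)
    (hD : ∑ l, w t.castSucc l * f (P t.succ b) (P t.castSucc l) ≠ 0) :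
    ∑ a, pgBwdKernel mu0 g f vadj R1 Rt P I t a b = 1 := by
  simp only [pgBwdKernel]
  rw [← sum_div, div_self hD]

theorem sum_pgBsiLaw (hS : ∑ l, w (Fin.last n) l ≠ 0)
    (hD : ∀ (t : Fin n) b, ∑ l, w t.castSucc l * f (P t.succ b) (P t.castSucc l) ≠ 0) :
    ∑ j, pgBsiLaw mu0 g f vadj R1 Rt P I j = 1 := by
  simp only [pgBsiLaw]
  rw [sum_pi_mul_prod_eq_sum_of_sum_eq_one n _ (fun a => w (Fin.last n) a / ∑ l, w (Fin.last n) l)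
    fun t b => sum_pgBwdKernel mu0 g f vadj R1 Rt P I t b (hD t b), ← sum_div, div_self hS]

theorem pgPhi_div_sum_eq_pgBsiLaw (post : (Fin (n + 1) → X) → ℝ) (Z : ℝ) (hZ : 0 < Z)
    (hpost : ∀ z : Fin (n + 1) → X,
      post z = mu0 (z 0) * (∏ t : Fin n, f (z t.succ) (z t.castSucc)) *
        (∏ t : Fin (n + 1), g t (z t)) / Z)
    (hmu0 : ∀ x, 0 < mu0 x) (hg : ∀ t x, 0 < g t x) (hf : ∀ a b, 0 < f a b)
    (hv : ∀ t x, 0 < vadj t x) (hR1 : ∀ x, 0 < R1 x) (hRt : ∀ t a b, 0 < Rt t a b)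
    (j : Fin (n + 1) → Fin N) :
    pgPhi N (n + 1) hT post mu0 g f vadj R1 Rt P I j /
        ∑ j', pgPhi N (n + 1) hT post mu0 g f vadj R1 Rt P I j' =
      pgBsiLaw mu0 g f vadj R1 Rt P I j := by
  have : Nonempty (Fin N) := ⟨j 0⟩
  have hw := pgWgt_pos_s9 mu0 g f vadj R1 Rt P I hmu0 hg hf hv hR1 hRt
  have hM := pgM_succ_pos mu0 g f vadj R1 Rt P I hw hv hRt
  have hS : 0 < ∑ l, w (Fin.last n) l := sum_pos (fun _ _ => hw _ _) univ_nonempty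
  refine div_sum_eq_of_eq_const_mul ?_
    (pgPhi_eq_mul_pgBsiLaw mu0 g f vadj R1 Rt P I hT post Z hpost (fun x => (hR1 x).ne')
      (fun t x => (hv t x).ne') (fun t a b => (hRt t a b).ne') (fun t m => (hw t m).ne') hS.ne'
      fun t i x => (hM t i x).ne')
    (sum_pgBsiLaw mu0 g f vadj R1 Rt P I hS.ne'
      fun t b => (sum_pos (fun _ _ => mul_pos (hw _ _) (hf _ _)) univ_nonempty).ne') j
  have hN : (0 : ℝ) < N := Nat.cast_pos.2 Fin.pos'
  exact (mul_pos (div_pos (pgPsi_pos mu0 g f vadj R1 Rt P I hT hR1 hM) (mul_pos hZ (pow_pos hN _)))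
    (mul_pos (prod_pos fun t _ => sum_pos (fun _ _ => mul_pos (hw _ _) (hv _ _)) univ_nonempty)
      hS)).ne'

end

/-- **Proposition 3: the conditional of `j_{1:T}` under `φ` is the backward-simulator law.**
With the joint posterior density of the trajectory given concretely (up to the positive
normalizing constant `Z`) by
`post z = μ_θ(x_1) ∏_{t=2}^T f_θ(x_t|x_{t-1}) ∏_{t=1}^T g_θ(y_t|x_t) / Z`,
the conditional distribution of `j_{1:T}` given the particle system `{X_{1:T}, I_{2:T}}`
under the artificial target `φ`, i.e. `φ(·)/∑_{j'} φ(·)`, coincides with the law of the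
backward simulator:
`(w_T^{j_T}/∑_l w_T^l) ∏_{t=2}^T w_{t-1}^{j_{t-1}} f_θ(x_t^{j_t}|x_{t-1}^{j_{t-1}}) /
(∑_l w_{t-1}^l f_θ(x_t^{j_t}|x_{t-1}^l))`. -/
theorem pgbsi_conditional_is_backward_simulator
    {X : Type*}
    (N T : ℕ) (hT : 1 ≤ T)
    (mu0 : X → ℝ) (g : ℕ → X → ℝ) (f : X → X → ℝ)
    (vadj : ℕ → X → ℝ) (R1 : X → ℝ) (Rt : ℕ → X → X → ℝ)
    -- positivity of all the densities involved
    (hmu0p : ∀ x, 0 < mu0 x) (hgp : ∀ t x, 0 < g t x) (hfp : ∀ a b, 0 < f a b)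
    (hvp : ∀ t x, 0 < vadj t x) (hR1p : ∀ x, 0 < R1 x) (hRtp : ∀ t a b, 0 < Rt t a b)
    (Z : ℝ) (hZ : 0 < Z)
    (post : (Fin T → X) → ℝ)
    (hpost : ∀ z : Fin T → X,
      post z = (mu0 (z ⟨0, by omega⟩) *
          (∏ t : Fin T, if h : 0 < t.val then
              f (z t) (z ⟨t.val - 1, by have := t.isLt; omega⟩) else 1) *
          ∏ t : Fin T, g t.val (z t)) / Z)
    (P : Fin T → Fin N → X) (I : Fin (T - 1) → Fin N → Fin N)
    (j : Fin T → Fin N) :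
    pgPhi N T hT post mu0 g f vadj R1 Rt P I j /
        (∑ j' : Fin T → Fin N, pgPhi N T hT post mu0 g f vadj R1 Rt P I j')
      = (pgWgt N T mu0 g f vadj R1 Rt P I ⟨T - 1, by omega⟩ (j ⟨T - 1, by omega⟩) /
          ∑ l, pgWgt N T mu0 g f vadj R1 Rt P I ⟨T - 1, by omega⟩ l) *
        ∏ t : Fin T,
          if h : 0 < t.val then
            pgWgt N T mu0 g f vadj R1 Rt P I ⟨t.val - 1, by have := t.isLt; omega⟩
                (j ⟨t.val - 1, by have := t.isLt; omega⟩) *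
              f (P t (j t)) (P ⟨t.val - 1, by have := t.isLt; omega⟩
                (j ⟨t.val - 1, by have := t.isLt; omega⟩)) /
              ∑ l, pgWgt N T mu0 g f vadj R1 Rt P I ⟨t.val - 1, by have := t.isLt; omega⟩ l *
                f (P t (j t)) (P ⟨t.val - 1, by have := t.isLt; omega⟩ l)
          else 1 := by
  obtain ⟨n, rfl⟩ : ∃ n, T = n + 1 := ⟨T - 1, by omega⟩
  rw [Fin.prod_dite_pos_eq_prod_succ]
  exact pgPhi_div_sum_eq_pgBsiLaw mu0 g f vadj R1 Rt P I hT post Z hZ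
    (fun z => by rw [hpost, Fin.prod_dite_pos_eq_prod_succ]; rfl) hmu0p hgp hfp hvp hR1p hRtp j
end
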